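/- Let R be a discrete valuation ring with valuation ν and residue characteristic p, let a_1,...,a_n be positive integers with p ∤ a_i for all i and p ∤ ∑_{j∈S} a_j for every nonempty proper subset S ⊊ {1,...,n}, but p | (a_1+...+a_n). Suppose x_1,...,x_n ∈ R are pairwise distinct, all reducing to 1 in the residue field, and for each i, a_i ∏_{j≠i}(x_j - x_i) = (a_1+...+a_n)∏_{j≠i} x_j in Frac(R). Then (n-1)·ν(x_i - x_j) = ν(a_1+...+a_n) for all distinct i, j. -/

import Mathlib

/-!
Let `v` be the valuation and `e` the least value of `v (xⱼ - xᵢ)`, attained at `(i₀, j₀)`.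
Taking valuations in the hypothesis gives `∑_{j ≠ i} v (xⱼ - xᵢ) = v (∑ aⱼ)` for every `i`, so
`(n - 1) e ≤ v (∑ aⱼ)`, with equality only if every difference has valuation `e`. It remains to
rule out `v (∑ aⱼ) > (n - 1) e`.

The hypothesis says that `∑ᵢ aᵢ xᵢ ∏_{j ≠ i} (X - xⱼ)`, of degree `< n`, takes the same value
`b = ±(∑ aⱼ) ∏ xⱼ` at the `n` nodes `xᵢ`, hence is the constant `b`. Writing
`xⱼ = x_{i₀} + πᵉ zⱼ`, the same holds for the `zⱼ` with `b` divided by `π^{e(n-1)}`; if that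
quotient is not a unit, reducing modulo `π` gives `∑ᵢ āᵢ ∏_{j ≠ i} (X - z̄ⱼ) = 0`. Comparing orders
of vanishing at `0`, the `āᵢ` with `z̄ᵢ = 0` sum to zero, so `p` divides the sum of the `aᵢ` over
a set containing `i₀` but not `j₀`.
-/

open Finset IsLocalRing

theorem Lagrange.map_nodal {R S ι : Type*} [CommRing R] [CommRing S] (f : R →+* S)
    (s : Finset ι) (v : ι → R) : (nodal s v).map f = nodal s (f ∘ v) := by
  simp [nodal, Polynomial.map_prod]

namespace Polynomial

open Lagrange

variable {R ι : Type*} [CommRing R] [IsDomain R] [Fintype ι] [DecidableEq ι]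

theorem sum_C_mul_nodal_erase_eq_C [Nonempty ι] {c x : ι → R} {b : R}
    (hx : Function.Injective x) (hcb : ∀ i, c i * ∏ j ∈ univ.erase i, (x i - x j) = b) :
    ∑ i, C (c i) * nodal (univ.erase i) x = C b := by
  have hcard : 0 < #(univ : Finset ι) := card_pos.2 univ_nonempty
  have hdeg : ∀ i, (C (c i) * nodal (univ.erase i) x).degree < #(univ : Finset ι) := by
    intro i
    calc (C (c i) * nodal (univ.erase i) x).degree
        ≤ 0 + (#(univ : Finset ι) - 1 : ℕ) := by
          grw [degree_mul_le, degree_C_le, degree_nodal, card_erase_of_mem (mem_univ i)]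
      _ < #(univ : Finset ι) := by norm_cast; omega
  refine eq_of_degrees_lt_of_eval_index_eq univ hx.injOn ?_ ?_ fun k _ => ?_
  · rw [← mem_degreeLT]
    exact Submodule.sum_mem _ fun i _ => mem_degreeLT.2 (hdeg i)
  · exact degree_C_le.trans_lt (by exact_mod_cast hcard)
  · rw [eval_finsetSum, Finset.sum_eq_single k, eval_mul, eval_C, eval_nodal, hcb, eval_C]
    · intro i _ hik
      rw [eval_mul, eval_nodal_at_node (mem_erase.2 ⟨Ne.symm hik, mem_univ k⟩), mul_zero]
    · simp

theorem sum_filter_eq_zero_of_sum_C_mul_nodal_erase_eq_zero [DecidableEq R] {w y : ι → R}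
    (h : ∑ i, C (w i) * nodal (univ.erase i) y = 0) (c : R) :
    ∑ i ∈ univ.filter (y · = c), w i = 0 := by
  set S := univ.filter (y · = c)
  have hyS : ∀ i ∈ S, y i = c := fun i hi => (mem_filter.1 hi).2
  have hS : nodal S y = (X - C c) ^ #S := by
    rw [nodal, prod_congr rfl fun i hi => by rw [hyS i hi], prod_const]
  have hin : ∀ i ∈ S, (X - C c) * nodal (univ.erase i) y = (X - C c) ^ #S * nodal Sᶜ y := by
    intro i hi
    rw [← hyS i hi, ← nodal_eq_mul_nodal_erase (mem_univ i), hyS i hi, ← hS]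
    exact (prod_mul_prod_compl S _).symm
  have hout : ∀ i ∈ Sᶜ, (X - C c) ^ #S * (X - C c) ∣ (X - C c) * nodal (univ.erase i) y := by
    intro i hi
    rw [mul_comm]
    refine mul_dvd_mul_left _ (hS ▸ prod_dvd_prod_of_subset _ _ _ fun j hj => ?_)
    exact mem_erase.2 ⟨by rintro rfl; exact mem_compl.1 hi hj, mem_univ j⟩
  have hsplit : (X - C c) ^ #S * (C (∑ i ∈ S, w i) * nodal Sᶜ y) =
      -∑ i ∈ Sᶜ, C (w i) * ((X - C c) * nodal (univ.erase i) y) := by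
    have hsum : ∑ i, C (w i) * ((X - C c) * nodal (univ.erase i) y) = 0 := by
      simp_rw [mul_left_comm (C _), ← mul_sum, h, mul_zero]
    rw [← sum_add_sum_compl S, sum_congr rfl fun i hi => by rw [hin i hi]] at hsum
    rw [map_sum, sum_mul, mul_sum, ← eq_neg_of_add_eq_zero_left hsum]
    exact sum_congr rfl fun _ _ => by ring
  have hdvd : X - C c ∣ C (∑ i ∈ S, w i) * nodal Sᶜ y := by
    refine (mul_dvd_mul_iff_left (pow_ne_zero #S (X_sub_C_ne_zero c))).1 ?_
    rw [hsplit, dvd_neg]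
    exact dvd_sum fun i hi => dvd_mul_of_dvd_right (hout i hi) _
  have hnode : eval c (nodal Sᶜ y) ≠ 0 :=
    eval_nodal_not_at_node fun i hi hc => mem_compl.1 hi (mem_filter.2 ⟨mem_univ i, hc.symm⟩)
  rw [dvd_iff_isRoot, IsRoot, eval_mul, eval_C] at hdvd
  exact (mul_eq_zero.1 hdvd).resolve_right hnode

end Polynomial

theorem ENat.eq_of_le_of_sum_le_card_mul {ι : Type*} {s : Finset ι} {f : ι → ℕ∞} {e : ℕ∞}
    (he : e ≠ ⊤) (hf : ∀ i ∈ s, e ≤ f i) (hsum : ∑ i ∈ s, f i ≤ #s * e) : ∀ i ∈ s, f i = e := by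
  classical
  by_contra! ⟨i, hi, hne⟩
  refine hsum.not_gt ?_
  calc (#s : ℕ∞) * e = ∑ _ ∈ s, e := by rw [sum_const, nsmul_eq_mul]
    _ = e + ∑ _ ∈ s.erase i, e := (add_sum_erase s _ hi).symm
    _ < f i + ∑ _ ∈ s.erase i, e :=
        WithTop.add_lt_add_right (ENat.sum_ne_top.2 fun _ _ => he) ((hf i hi).lt_of_ne hne.symm)
    _ ≤ f i + ∑ j ∈ s.erase i, f j := by gcongr with j hj; exact hf j (mem_of_mem_erase hj)
    _ = ∑ i ∈ s, f i := add_sum_erase s f hi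

theorem Finset.mul_mul_prod_erase_sub_eq {R ι : Type*} [CommRing R] [Fintype ι] [DecidableEq ι]
    {x : ι → R} {a α : R} {k : ι}
    (h : a * ∏ l ∈ univ.erase k, (x l - x k) = α * ∏ l ∈ univ.erase k, x l) :
    a * x k * ∏ l ∈ univ.erase k, (x k - x l) = (-1) ^ (Fintype.card ι - 1) * α * ∏ l, x l := by
  have hsign := prod_neg (s := univ.erase k) fun l => x l - x k
  simp_rw [neg_sub, card_erase_of_mem (mem_univ k), card_univ] at hsign
  calc a * x k * ∏ l ∈ univ.erase k, (x k - x l)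
      = (-1) ^ (Fintype.card ι - 1) * x k * (a * ∏ l ∈ univ.erase k, (x l - x k)) := by
        rw [hsign]; ring
    _ = (-1) ^ (Fintype.card ι - 1) * α * (x k * ∏ l ∈ univ.erase k, x l) := by rw [h]; ring
    _ = (-1) ^ (Fintype.card ι - 1) * α * ∏ l, x l := by rw [mul_prod_erase _ _ (mem_univ k)]

theorem IsLocalRing.isUnit_natCast_iff {R : Type*} [CommRing R] [IsLocalRing R] (p : ℕ)
    [CharP (ResidueField R) p] (m : ℕ) : IsUnit (m : R) ↔ ¬ p ∣ m := by
  rw [← residue_ne_zero_iff_isUnit, map_natCast, Ne, CharP.cast_eq_zero_iff]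

open Polynomial Lagrange in
theorem IsLocalRing.sum_residue_eq_zero_of_mul_prod_erase_sub_eq {R ι : Type*} [CommRing R]
    [IsDomain R] [IsLocalRing R] [Fintype ι] [DecidableEq ι] [DecidableEq (ResidueField R)]
    {c z : ι → R} {b : R} (hz : Function.Injective z)
    (hcb : ∀ i, c i * ∏ j ∈ univ.erase i, (z i - z j) = b) (hb : b ∈ maximalIdeal R)
    (ζ : ResidueField R) :
    ∑ i ∈ univ.filter (fun i => residue R (z i) = ζ), residue R (c i) = 0 := by
  cases isEmpty_or_nonempty ι
  · simp
  have hred := congrArg (Polynomial.map (residue R)) (sum_C_mul_nodal_erase_eq_C hz hcb)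
  simp only [Polynomial.map_sum, Polynomial.map_mul, map_C, map_nodal,
    (residue_eq_zero_iff b).2 hb, map_zero] at hred
  exact sum_filter_eq_zero_of_sum_C_mul_nodal_erase_eq_zero hred ζ

namespace IsDiscreteValuationRing

variable {R ι : Type*} [CommRing R] [IsDomain R] [IsDiscreteValuationRing R]

theorem addVal_prod (s : Finset ι) (f : ι → R) :
    addVal R (∏ i ∈ s, f i) = ∑ i ∈ s, addVal R (f i) := by
  classical
  induction s using Finset.induction_on with
  | empty => simp
  | insert i s hi ih => rw [prod_insert hi, sum_insert hi, addVal_mul, ih]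

theorem exists_sum_residue_eq_zero_of_lt_addVal [Fintype ι] [DecidableEq ι] {c x : ι → R} {b : R}
    (hx : Function.Injective x) (hcb : ∀ i, c i * ∏ j ∈ univ.erase i, (x i - x j) = b)
    {i₀ j₀ : ι} (hne : j₀ ≠ i₀) (hmin : ∀ j ≠ i₀, addVal R (x j₀ - x i₀) ≤ addVal R (x j - x i₀))
    (hb : (Fintype.card ι - 1 : ℕ) * addVal R (x j₀ - x i₀) < addVal R b) :
    ∃ S : Finset ι, i₀ ∈ S ∧ j₀ ∉ S ∧ ∑ i ∈ S, residue R (c i) = 0 := by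
  classical
  obtain ⟨π, hπ⟩ := exists_irreducible R
  obtain ⟨e, he⟩ :=
    ENat.ne_top_iff_exists.1 (addVal_eq_top_iff.not.2 (sub_ne_zero.2 (hx.ne hne)))
  have hdvd : ∀ j, π ^ e ∣ x j - x i₀ := fun j => by
    rcases eq_or_ne j i₀ with rfl | hj
    · simp
    rw [← addVal_le_iff_dvd, hπ.addVal_pow, he]
    exact hmin j hj
  choose z hz using hdvd
  have hxz : ∀ i j, x i - x j = π ^ e * (z i - z j) := fun i j => by
    rw [mul_sub, ← hz, ← hz]
    ring
  have hπe : π ^ e ≠ 0 := pow_ne_zero _ hπ.ne_zero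
  have hz_inj : Function.Injective z := fun i j h =>
    hx (sub_eq_zero.1 (by rw [hxz, h, sub_self, mul_zero]))
  set N := Fintype.card ι - 1
  have hcz : ∀ i, (π ^ e) ^ N * (c i * ∏ j ∈ univ.erase i, (z i - z j)) = b := fun i => by
    rw [← hcb i]
    simp_rw [hxz, prod_mul_distrib, prod_const, card_erase_of_mem (mem_univ i), card_univ]
    ring
  set b' := c i₀ * ∏ j ∈ univ.erase i₀, (z i₀ - z j)
  have hb' : b' ∈ IsLocalRing.maximalIdeal R := fun hu => by
    have hv := congrArg (addVal R) (hcz i₀)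
    rw [addVal_mul, ← pow_mul, hπ.addVal_pow, addVal_eq_zero_iff.2 hu, add_zero] at hv
    rw [← hv, ← he] at hb
    exact hb.ne (by push_cast; ring)
  refine ⟨_, ?_, ?_, sum_residue_eq_zero_of_mul_prod_erase_sub_eq hz_inj
    (fun i => mul_left_cancel₀ (pow_ne_zero N hπe) ((hcz i).trans (hcz i₀).symm)) hb' 0⟩
  · have hz₀ : z i₀ = 0 := by simpa [hπe] using (hz i₀).symm
    simp [hz₀]
  · have hv := congrArg (addVal R) (hz j₀)
    rw [addVal_mul, hπ.addVal_pow, ← he] at hv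
    simpa [residue_ne_zero_iff_isUnit, ← addVal_eq_zero_iff] using
      ENat.add_right_injective_of_ne_top (ENat.natCast_ne_top e)
        (hv.symm.trans (add_zero _).symm)

end IsDiscreteValuationRing

open IsDiscreteValuationRing

theorem stmt16_general {R : Type*} [CommRing R] [IsDomain R] [IsDiscreteValuationRing R]
    (p : ℕ) [CharP (ResidueField R) p]
    (n : ℕ)
    (a : Fin n → ℕ)
    (hpa : ∀ i, ¬ p ∣ a i)
    (hreg : ∀ S : Finset (Fin n), S.Nonempty → S ≠ univ → ¬ p ∣ ∑ j ∈ S, a j)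
    (x : Fin n → R) (hx : Function.Injective x)
    (hx1 : ∀ i, residue R (x i) = 1)
    (heq : ∀ i, (a i : R) * ∏ j ∈ univ.erase i, (x j - x i) =
      ((∑ j, a j : ℕ) : R) * ∏ j ∈ univ.erase i, x j) :
    ∀ i j, i ≠ j →
      ((n - 1 : ℕ) : ℕ∞) * IsDiscreteValuationRing.addVal R (x i - x j) =
        IsDiscreteValuationRing.addVal R ((∑ k, a k : ℕ) : R) := by
  intro i j hij
  set α : R := ((∑ k, a k : ℕ) : R)
  have hxu : ∀ k, IsUnit (x k) := fun k => (residue_ne_zero_iff_isUnit _).1 (by simp [hx1])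
  have hrow : ∀ k, ∑ l ∈ univ.erase k, addVal R (x l - x k) = addVal R α := fun k => by
    simpa [addVal_mul, addVal_prod, addVal_eq_zero_iff.2, hxu, (isUnit_natCast_iff p _).2 (hpa k)]
      using congrArg (addVal R) (heq k)
  obtain ⟨⟨i₀, j₀⟩, hmem, hmin⟩ := univ.offDiag.exists_min_image
    (fun q => addVal R (x q.2 - x q.1)) ⟨(i, j), by simpa using hij⟩
  have hne : j₀ ≠ i₀ := (mem_offDiag.1 hmem).2.2.symm
  have hle : addVal R α ≤ (n - 1 : ℕ) * addVal R (x j₀ - x i₀) := by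
    by_contra! hlt
    obtain ⟨S, hi₀, hj₀, hS⟩ := exists_sum_residue_eq_zero_of_lt_addVal hx
      (fun k => mul_mul_prod_erase_sub_eq (heq k)) hne
      (fun l hl => hmin (i₀, l) (by simpa using hl.symm))
      (by simpa [addVal_mul, addVal_prod, addVal_eq_zero_iff.2, hxu, isUnit_one.neg.pow] using hlt)
    refine hreg S ⟨i₀, hi₀⟩ (fun h => hj₀ (h ▸ mem_univ j₀)) ?_
    exact (CharP.cast_eq_zero_iff (ResidueField R) p _).1 (by simpa [hx1] using hS)
  have hall := ENat.eq_of_le_of_sum_le_card_mul (s := univ.erase j)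
    (f := fun l => addVal R (x l - x j)) (addVal_eq_top_iff.not.2 (sub_ne_zero.2 (hx.ne hne)))
    (fun l hl => hmin (j, l) (by simpa using (ne_of_mem_erase hl).symm))
    (by rwa [hrow j, card_erase_of_mem (mem_univ j), card_univ, Fintype.card_fin])
  rw [hall i (mem_erase.2 ⟨hij, mem_univ i⟩), ← hrow j, sum_congr rfl hall, sum_const,
    card_erase_of_mem (mem_univ j), card_univ, Fintype.card_fin, nsmul_eq_mul]

/-- Lemma 9.2 (valuations of root differences at a prime regular at infinity):
let `R` be a discrete valuation ring with residue characteristic `p`, and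
`a₁, …, aₙ` positive integers with `p ∤ aᵢ` for all `i`, `p` dividing no subset
sum over a nonempty proper subset `S ⊊ {1, …, n}`, but `p ∣ a₁+⋯+aₙ`. If
`x₁, …, xₙ ∈ R` are pairwise distinct, all reducing to `1` in the residue field,
and `aᵢ ∏_{j≠i}(xⱼ-xᵢ) = (∑aⱼ) ∏_{j≠i} xⱼ` for all `i`, then
`(n-1)·ν(xᵢ - xⱼ) = ν(a₁+⋯+aₙ)` for all distinct `i, j`. -/
theorem stmt16 {R : Type*} [CommRing R] [IsDomain R] [IsDiscreteValuationRing R]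
    (p : ℕ) (hp : p.Prime) [CharP (ResidueField R) p]
    (n : ℕ) (hn : 0 < n)
    (a : Fin n → ℕ) (ha : ∀ i, 0 < a i)
    (hpa : ∀ i, ¬ p ∣ a i)
    (hreg : ∀ S : Finset (Fin n), S.Nonempty → S ≠ univ → ¬ p ∣ ∑ j ∈ S, a j)
    (hpsum : p ∣ ∑ i, a i)
    (x : Fin n → R) (hx : Function.Injective x)
    (hx1 : ∀ i, residue R (x i) = 1)
    (heq : ∀ i, (a i : R) * ∏ j ∈ univ.erase i, (x j - x i) =
      ((∑ j, a j : ℕ) : R) * ∏ j ∈ univ.erase i, x j) :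
    ∀ i j, i ≠ j →
      ((n - 1 : ℕ) : ℕ∞) * IsDiscreteValuationRing.addVal R (x i - x j) =
        IsDiscreteValuationRing.addVal R ((∑ k, a k : ℕ) : R) :=
  stmt16_general p n a hpa hreg x hx hx1 heq
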